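/- arXiv:1708.01413 — 6 statements merged into one kernel-verified Lean document; each statement's English description precedes it below -/
import Mathlib

section
/- If γ ≠ 0, η ≠ 0, and X is invertible, then the only fixed point of the APC error recursion is zero: if vectors e_1,…,e_m, ē ∈ ℝ^n satisfy e_i = (1−γ) e_i + γ P_i ē for every i and ē = (η(1−γ)/m) Σ_{i=1}^m e_i + ((ηγ/m) Σ_{i=1}^m P_i + (1−η) I_n) ē, then ē = 0 and e_i = 0 for every i. -/
open Matrix

/-- If `γ ≠ 0`, `η ≠ 0` and `X` is invertible, the only fixed point of the APC
error recursion is zero. -/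
theorem apc_fixed_point_zero
    {n p m : ℕ}
    (A : Fin m → Matrix (Fin p) (Fin n) ℝ)
    (hfr : ∀ i, Invertible (A i * (A i)ᵀ))
    (γ η : ℝ) (hγ : γ ≠ 0) (hη : η ≠ 0)
    (P : Fin m → Matrix (Fin n) (Fin n) ℝ)
    (hP : ∀ i, P i = 1 - (A i)ᵀ * (A i * (A i)ᵀ)⁻¹ * A i)
    (X : Matrix (Fin n) (Fin n) ℝ)
    (hX : X = ((m : ℝ))⁻¹ • ∑ i, (A i)ᵀ * (A i * (A i)ᵀ)⁻¹ * A i)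
    (hXinv : Invertible X)
    (e : Fin m → Fin n → ℝ) (ebar : Fin n → ℝ)
    (hfix1 : ∀ i, e i = (1 - γ) • e i + γ • (P i).mulVec ebar)
    (hfix2 : ebar = (η * (1 - γ) / m) • ∑ i, e i
        + ((η * γ / m) • ∑ i, P i + (1 - η) • (1 : Matrix (Fin n) (Fin n) ℝ)).mulVec ebar) :
    ebar = 0 ∧ ∀ i, e i = 0 := by
  have he : ∀ i, e i = (P i).mulVec ebar := by
    intro i
    have h3 := sub_eq_of_eq_add' (hfix1 i)
    have h4 : γ • e i = γ • (P i).mulVec ebar := by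
      rw [← h3]; module
    exact smul_right_injective _ hγ h4
  have hsum : (∑ i, e i) = (∑ i, P i).mulVec ebar := by
    simp_rw [he]
    ext j
    simp only [Finset.sum_apply, Matrix.mulVec, dotProduct, Finset.sum_apply,
      Matrix.sum_apply, Finset.sum_mul]
    rw [Finset.sum_comm]
  set w := (∑ i, P i).mulVec ebar with hw
  have h2 : ebar = (η * (1 - γ) / m) • w + ((η * γ / m) • w + (1 - η) • ebar) := by
    conv_lhs => rw [hfix2]
    rw [hsum, Matrix.add_mulVec, Matrix.smul_mulVec, Matrix.smul_mulVec,
      Matrix.one_mulVec]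
  have hc : η * (1 - γ) / m + η * γ / m = η / m := by ring
  have h5 : η • ebar = (η / m) • w := by
    have h6 := congrArg (fun v => v - (1 - η) • ebar) h2
    rw [show η • ebar = ebar - (1 - η) • ebar from by module, h6, ← hc, add_smul]
    module
  have hbar : ebar = 0 := by
    rcases eq_or_ne m 0 with hm | hm
    · subst hm
      have hw0 : w = 0 := by
        simp [hw]
      rw [hw0, smul_zero] at h5
      exact smul_right_injective _ hη (by simpa using h5)
    · have hm' : (m : ℝ) ≠ 0 := Nat.cast_ne_zero.mpr hm
      have hSX : (∑ i, P i) = (m : ℝ) • (1 : Matrix (Fin n) (Fin n) ℝ) - (m : ℝ) • X := by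
        simp_rw [hP, hX]
        rw [Finset.sum_sub_distrib, smul_smul, mul_inv_cancel₀ hm', one_smul,
          Finset.sum_const, Finset.card_univ, Fintype.card_fin, ← Nat.cast_smul_eq_nsmul ℝ]
      have hXv : X.mulVec ebar = 0 := by
        have hw' : w = (m : ℝ) • ebar - (m : ℝ) • X.mulVec ebar := by
          rw [hw, hSX, Matrix.sub_mulVec, Matrix.smul_mulVec, Matrix.smul_mulVec,
            Matrix.one_mulVec]
        rw [hw', smul_sub, smul_smul, smul_smul, div_mul_cancel₀ _ hm'] at h5
        have h7 : η • X.mulVec ebar = η • (0 : Fin n → ℝ) := by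
          rw [smul_zero]
          have := congrArg (fun v => η • ebar - v) h5
          simpa using this.symm
        exact smul_right_injective _ hη h7
      calc ebar = ((⅟X * X).mulVec ebar) := by rw [invOf_mul_self, Matrix.one_mulVec]
        _ = (⅟X).mulVec (X.mulVec ebar) := by rw [Matrix.mulVec_mulVec]
        _ = 0 := by rw [hXv, Matrix.mulVec_zero]
  refine ⟨hbar, fun i => ?_⟩
  rw [he i, hbar, Matrix.mulVec_zero]
end

section
/- Let B be the APC iteration matrix and let μ_1,…,μ_n be the eigenvalues (with multiplicity) of the real symmetric matrix X. Then for every λ ∈ ℂ, det(B − λ I_{(m+1)n}) = (1 − γ − λ)^{(m−1)n} · ∏_{i=1}^n (λ² + (γ + η − 2 − ηγ(1−μ_i)) λ + (γ−1)(η−1)), where the determinant is taken over ℂ after mapping the real matrix B into ℂ. -/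
/-!
Put `a = 1 - γ - λ`. The upper-left block of `B - λ` is `a • 1`, so a Schur complement gives
`det (B - λ) = a ^ ((m - 1) n) · det (a (M - λ) - C U)` with `U, C` the off-diagonal blocks.
Since `∑ P_i = m (1 - X)`, both `C U` and `M` are combinations of `1` and `X`, and so is the Schur
complement; its determinant is `∏ (b + c μ_i)` by the spectral theorem. Computing over `ℂ[X]`,
where `a = C (1 - γ) - X` is a nonzero element of a domain, avoids the case `λ = 1 - γ`.
-/

open Matrix

namespace Matrix

variable {l o R : Type*} [Fintype l] [Fintype o] [DecidableEq l] [DecidableEq o] [CommRing R]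

theorem det_fromBlocks_smul_one_mul_pow (a : R) (U : Matrix l o R) (V : Matrix o l R)
    (D : Matrix o o R) :
    det (fromBlocks (a • 1) U V D) * a ^ Fintype.card o
      = a ^ Fintype.card l * det (a • D - V * U) := by
  -- Right multiplication by `[[1, -U], [0, a]]` clears the upper-right block without inverting `a`.
  have hmul : fromBlocks (a • 1) U V D * fromBlocks 1 (-U) 0 (a • 1)
      = fromBlocks (a • 1) 0 V (a • D - V * U) := by
    simp [fromBlocks_multiply, sub_eq_neg_add]
  simpa [det_smul, mul_comm] using congrArg det hmul

theorem IsHermitian.det_smul_one_add_smul_map {n : Type*} [Fintype n] [DecidableEq n]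
    [Algebra ℝ R] {X : Matrix n n ℝ} (hX : X.IsHermitian) (b c : R) :
    det (b • 1 + c • X.map (algebraMap ℝ R))
      = ∏ i, (b + c * algebraMap ℝ R (hX.eigenvalues i)) := by
  set f := algebraMap ℝ R
  set U : Matrix n n ℝ := ↑hX.eigenvectorUnitary
  have hUU : U.map f * (star U).map f = 1 := by
    rw [← Matrix.map_mul, Unitary.mul_star_self_of_mem hX.eigenvectorUnitary.2,
      Matrix.map_one _ f.map_zero f.map_one]
  have hUU' : (star U).map f * U.map f = 1 := by
    rw [← Matrix.map_mul, Unitary.star_mul_self_of_mem hX.eigenvectorUnitary.2,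
      Matrix.map_one _ f.map_zero f.map_one]
  have hconj : b • 1 + c • X.map f
      = U.map f * diagonal (fun i => b + c * f (hX.eigenvalues i)) * (star U).map f := by
    have hdiag : diagonal (fun i => b + c * f (hX.eigenvalues i))
        = b • 1 + c • (diagonal (RCLike.ofReal ∘ hX.eigenvalues)).map f := by
      rw [diagonal_map f.map_zero, smul_one_eq_diagonal, ← diagonal_smul, diagonal_add]
      rfl
    have hspec : X = U * diagonal (RCLike.ofReal ∘ hX.eigenvalues) * star U := by
      simpa only [Unitary.conjStarAlgAut_apply] using hX.spectral_theorem
    rw [hdiag]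
    conv_lhs => rw [hspec, Matrix.map_mul, Matrix.map_mul]
    simp only [Matrix.mul_add, Matrix.add_mul, Matrix.mul_smul, Matrix.smul_mul, Matrix.mul_one,
      hUU, Matrix.mul_assoc]
  rw [hconj, det_conj_of_mul_eq_one hUU hUU', det_diagonal]

theorem one_row_mul_stack_eq_smul_sum {ι n k : Type*} [Fintype ι] [Fintype n] [DecidableEq n]
    (c d : R) (P : ι → Matrix n k R) :
    (of fun j (q : ι × n) => c * (1 : Matrix n n R) j q.2 : Matrix n (ι × n) R)
        * (of fun q j => d * P q.1 q.2 j : Matrix (ι × n) k R)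
      = (c * d) • ∑ i, P i := by
  ext j j'
  simp [mul_apply, Fintype.sum_prod_type, one_apply, Finset.mul_sum, sum_apply, mul_assoc]

end Matrix

theorem Polynomial.eval_det_map_algebraMap_sub_X_smul {K S n : Type*} [CommSemiring K]
    [CommRing S] [Algebra K S] [Fintype n] [DecidableEq n] (N : Matrix n n K) (s : S) :
    (det (N.map (algebraMap K (Polynomial S)) - (Polynomial.X : Polynomial S) • 1)).eval s
      = det (N.map (algebraMap K S) - s • 1) := by
  rw [← Polynomial.coe_evalRingHom, RingHom.map_det]
  congr 1
  ext i j
  simp [one_apply, apply_ite (Polynomial.eval s)]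

theorem sum_sub_eq_card_smul_sub_mean {ι K E : Type*} [Fintype ι] [Field K] [AddCommGroup E]
    [Module K E] (h : (Fintype.card ι : K) ≠ 0) (w : E) (v : ι → E) :
    ∑ i, (w - v i) = (Fintype.card ι : K) • (w - (Fintype.card ι : K)⁻¹ • ∑ i, v i) := by
  rw [Finset.sum_sub_distrib, smul_sub, smul_inv_smul₀ h, Finset.sum_const, Finset.card_univ,
    Nat.cast_smul_eq_nsmul]

theorem det_apc_sub_smul_one {ι κ R : Type*} [Fintype ι] [Fintype κ] [DecidableEq ι]
    [DecidableEq κ] [CommRing R] [IsDomain R] [Algebra ℝ R] {γ η : ℝ} {X : Matrix κ κ ℝ} (hX : X.IsHermitian)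
    {U : Matrix ι κ ℝ} {V : Matrix κ ι ℝ} {M : Matrix κ κ ℝ}
    (hVU : V * U = (η * (1 - γ) * γ) • (1 - X)) (hM : M = (η * γ) • (1 - X) + (1 - η) • 1)
    (hcard : Fintype.card κ ≤ Fintype.card ι) {t : R} (ht : algebraMap ℝ R (1 - γ) - t ≠ 0) :
    det ((fromBlocks ((1 - γ) • 1) U V M).map (algebraMap ℝ R) - t • 1)
      = (algebraMap ℝ R (1 - γ) - t) ^ (Fintype.card ι - Fintype.card κ)
        * ∏ i, (t ^ 2 + algebraMap ℝ R (γ + η - 2 - η * γ * (1 - hX.eigenvalues i)) * t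
          + algebraMap ℝ R ((γ - 1) * (η - 1))) := by
  set f := algebraMap ℝ R
  set a := f (1 - γ) - t
  have hblocks : (fromBlocks ((1 - γ) • 1) U V M).map f - t • 1
      = fromBlocks (a • 1) (U.map f) (V.map f) (M.map f - t • 1) := by
    ext (i | i) (j | j)
    · by_cases hij : i = j <;> simp [one_apply, hij, a, f]
    all_goals simp [one_apply]
  have hschur : a • (M.map f - t • 1) - V.map f * U.map f
      = (a * (f (1 - η) - t) - t * f (η * γ)) • 1 + (t * f (η * γ)) • X.map f := by
    rw [← Matrix.map_mul, hVU, hM]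
    ext i j
    by_cases hij : i = j <;> simp [one_apply, hij, a, f] <;> ring
  refine mul_right_cancel₀ (pow_ne_zero (Fintype.card κ) ht) ?_
  rw [mul_right_comm, ← pow_add, Nat.sub_add_cancel hcard, hblocks,
    det_fromBlocks_smul_one_mul_pow, hschur, hX.det_smul_one_add_smul_map]
  congr 1
  refine Finset.prod_congr rfl fun i _ => ?_
  simp only [a, f, map_sub, map_mul, map_add, map_one, map_ofNat]
  ring

theorem apc_iteration_matrix_char_det_general
    {n p m : ℕ} (hm : 1 ≤ m)
    (A : Fin m → Matrix (Fin p) (Fin n) ℝ)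
    (γ η : ℝ)
    (P : Fin m → Matrix (Fin n) (Fin n) ℝ)
    (hP : ∀ i, P i = 1 - (A i)ᵀ * (A i * (A i)ᵀ)⁻¹ * A i)
    (X : Matrix (Fin n) (Fin n) ℝ)
    (hX : X = ((m : ℝ))⁻¹ • ∑ i, (A i)ᵀ * (A i * (A i)ᵀ)⁻¹ * A i)
    (hXh : X.IsHermitian)
    (M : Matrix (Fin n) (Fin n) ℝ)
    (hM : M = (η * γ / m) • ∑ i, P i + (1 - η) • (1 : Matrix (Fin n) (Fin n) ℝ))
    (B : Matrix (Fin m × Fin n ⊕ Fin n) (Fin m × Fin n ⊕ Fin n) ℝ)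
    (hB : B = Matrix.fromBlocks
        ((1 - γ) • (1 : Matrix (Fin m × Fin n) (Fin m × Fin n) ℝ))
        (fun q j => γ * P q.1 q.2 j)
        (fun j q => (η * (1 - γ) / m) * (1 : Matrix (Fin n) (Fin n) ℝ) j q.2)
        M) :
    ∀ lam : ℂ,
      (B.map (algebraMap ℝ ℂ) - lam • 1).det
        = (1 - (γ : ℂ) - lam) ^ ((m - 1) * n)
          * ∏ i : Fin n,
              (lam ^ 2
                + ((γ : ℂ) + (η : ℂ) - 2 - (η : ℂ) * (γ : ℂ) * (1 - (hXh.eigenvalues i : ℂ))) * lam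
                + ((γ : ℂ) - 1) * ((η : ℂ) - 1)) := by
  have hm0 : (m : ℝ) ≠ 0 := Nat.cast_ne_zero.mpr (by omega)
  have hsumP : ∑ i, P i = (m : ℝ) • (1 - X) := by
    simpa [hP, hX] using sum_sub_eq_card_smul_sub_mean (by simpa using hm0) 1
      fun i => (A i)ᵀ * (A i * (A i)ᵀ)⁻¹ * A i
  have hVU := one_row_mul_stack_eq_smul_sum (η * (1 - γ) / m) γ P
  rw [hsumP, smul_smul, div_mul_eq_mul_div, div_mul_cancel₀ _ hm0] at hVU
  have hM' : M = (η * γ) • (1 - X) + (1 - η) • 1 := by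
    rw [hM, hsumP, smul_smul, div_mul_cancel₀ _ hm0]
  have hcard : Fintype.card (Fin n) ≤ Fintype.card (Fin m × Fin n) := by
    simpa using Nat.le_mul_of_pos_left n hm
  have ht : algebraMap ℝ (Polynomial ℂ) (1 - γ) - Polynomial.X ≠ 0 :=
    sub_ne_zero.mpr (Polynomial.X_ne_C _).symm
  intro lam
  rw [← Polynomial.eval_det_map_algebraMap_sub_X_smul, hB]
  refine (congrArg (Polynomial.eval lam) (det_apc_sub_smul_one hXh hVU hM' hcard ht)).trans ?_
  simp [Polynomial.eval_prod, Nat.sub_one_mul]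

/-- Characteristic determinant of the APC iteration matrix `B`:
for every `λ ∈ ℂ`,
`det(B − λI) = (1−γ−λ)^{(m−1)n} ∏_{i=1}^n (λ² + (γ+η−2−ηγ(1−μ_i))λ + (γ−1)(η−1))`,
where `μ_1, …, μ_n` are the eigenvalues of `X`. -/
theorem apc_iteration_matrix_char_det
    {n p m : ℕ} (hm : 1 ≤ m)
    (A : Fin m → Matrix (Fin p) (Fin n) ℝ)
    (hfr : ∀ i, Invertible (A i * (A i)ᵀ))
    (γ η : ℝ)
    (P : Fin m → Matrix (Fin n) (Fin n) ℝ)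
    (hP : ∀ i, P i = 1 - (A i)ᵀ * (A i * (A i)ᵀ)⁻¹ * A i)
    (X : Matrix (Fin n) (Fin n) ℝ)
    (hX : X = ((m : ℝ))⁻¹ • ∑ i, (A i)ᵀ * (A i * (A i)ᵀ)⁻¹ * A i)
    (hXh : X.IsHermitian)
    (M : Matrix (Fin n) (Fin n) ℝ)
    (hM : M = (η * γ / m) • ∑ i, P i + (1 - η) • (1 : Matrix (Fin n) (Fin n) ℝ))
    (B : Matrix (Fin m × Fin n ⊕ Fin n) (Fin m × Fin n ⊕ Fin n) ℝ)
    (hB : B = Matrix.fromBlocks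
        ((1 - γ) • (1 : Matrix (Fin m × Fin n) (Fin m × Fin n) ℝ))
        (fun q j => γ * P q.1 q.2 j)
        (fun j q => (η * (1 - γ) / m) * (1 : Matrix (Fin n) (Fin n) ℝ) j q.2)
        M) :
    ∀ lam : ℂ,
      (B.map (algebraMap ℝ ℂ) - lam • 1).det
        = (1 - (γ : ℂ) - lam) ^ ((m - 1) * n)
          * ∏ i : Fin n,
              (lam ^ 2
                + ((γ : ℂ) + (η : ℂ) - 2 - (η : ℂ) * (γ : ℂ) * (1 - (hXh.eigenvalues i : ℂ))) * lam
                + ((γ : ℂ) - 1) * ((η : ℂ) - 1)) :=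
  apc_iteration_matrix_char_det_general hm A γ η P hP X hX hXh M hM B hB
end

section
/- Let B be the APC iteration matrix with γ ∈ (0, 2) and m ≥ 2, and let μ_1,…,μ_n be the eigenvalues of the real symmetric matrix X. Then the spectral radius of B (the maximum modulus of its complex eigenvalues) equals the maximum of |1−γ| and max over i = 1,…,n of the maximum modulus of the complex roots of p_{μ_i}(λ) = λ² + (γ + η − 2 − ηγ(1−μ_i)) λ + (γ−1)(η−1). -/
/-!
For `λ ≠ 1 - γ`, the top block of an eigenvector `(u, v)` of `B` is forced to be
`u_i = γ / (λ + γ - 1) • P_i v`. Substituting it into the bottom block and using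
`∑ P_i = m (I - X)` leaves `η γ λ (I - X) v = (λ + γ - 1)(λ + η - 1) v`, so `λ` is an eigenvalue
of `B` exactly when `p_μ(λ) = 0` for some eigenvalue `μ` of `X`. Since `m ≥ 2`, there are nonzero
top blocks with vanishing sums over `i`; with `v = 0` they are eigenvectors for `1 - γ`.
The spectrum of `B` is therefore `{1 - γ}` together with the finitely many roots of the `p_{μ_i}`.
-/

open Matrix

theorem Matrix.mem_spectrum_iff_exists_mulVec_eq_smul {K n : Type*} [Field K] [Fintype n]
    [DecidableEq n] (A : Matrix n n K) (c : K) :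
    c ∈ spectrum K A ↔ ∃ v ≠ 0, A *ᵥ v = c • v := by
  rw [← spectrum_toLin', ← Module.End.hasEigenvalue_iff_mem_spectrum,
    Module.End.hasEigenvalue_iff, Submodule.ne_bot_iff]
  simp [and_comm]

theorem Matrix.IsHermitian.spectrum_map_algebraMap_eq_range {n : Type*} [Fintype n]
    [DecidableEq n] {X : Matrix n n ℝ} (hX : X.IsHermitian) :
    spectrum ℂ (X.map (algebraMap ℝ ℂ)) = Set.range fun i => (hX.eigenvalues i : ℂ) := by
  ext z
  rw [mem_spectrum_iff_isRoot_charpoly, charpoly_map, hX.charpoly_eq]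
  simp [Polynomial.map_prod, Polynomial.eval_prod, Finset.prod_eq_zero_iff, sub_eq_zero]
  exact exists_congr fun _ => eq_comm

theorem Set.Finite.sSup_norm_image_insert {E : Type*} [Norm E] (a : E) {S : Set E}
    (hS : S.Finite) (hne : S.Nonempty) : sSup (norm '' insert a S) = max ‖a‖ (sSup (norm '' S)) := by
  rw [Set.image_insert_eq]
  exact csSup_insert (hS.image _).bddAbove (hne.image _)

namespace APC

variable {K : Type*} [Field K]

def quadratic (γ η μ z : K) : K :=
  z ^ 2 + (γ + η - 2 - η * γ * (1 - μ)) * z + (γ - 1) * (η - 1)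

theorem quadratic_eq_mul_sub_mul (γ η μ z : K) :
    quadratic γ η μ z = (z + γ - 1) * (z + η - 1) - η * γ * z * (1 - μ) := by
  unfold quadratic
  ring

theorem exists_quadratic_eq_zero [IsAlgClosed K] [NeZero (2 : K)] (γ η μ : K) :
    ∃ z, quadratic γ η μ z = 0 := by
  obtain ⟨z, hz⟩ := _root_.exists_quadratic_eq_zero one_ne_zero
    (IsAlgClosed.exists_eq_mul_self (discrim 1 (γ + η - 2 - η * γ * (1 - μ)) ((γ - 1) * (η - 1))))
  exact ⟨z, by rw [quadratic, ← hz]; ring⟩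

variable {ι κ : Type*} [Fintype ι] [Fintype κ] [DecidableEq ι] [DecidableEq κ]

def iterationMatrix (γ η : K) (P : ι → Matrix κ κ K) : Matrix (ι × κ ⊕ κ) (ι × κ ⊕ κ) K :=
  fromBlocks ((1 - γ) • 1) (of fun q j => γ * P q.1 q.2 j)
    (of fun j q => (η * (1 - γ) / Fintype.card ι) * (1 : Matrix κ κ K) j q.2)
    ((η * γ / Fintype.card ι) • ∑ i, P i + (1 - η) • 1)

omit [Fintype κ] in
theorem iterationMatrix_map {L : Type*} [Field L] (f : K →+* L) (γ η : K) (P : ι → Matrix κ κ K) :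
    (iterationMatrix γ η P).map f = iterationMatrix (f γ) (f η) fun i => (P i).map f := by
  ext (q | j) (q' | k) <;>
    simp [iterationMatrix, one_apply, Matrix.sum_apply, apply_ite f]

theorem iterationMatrix_mulVec (γ η : K) (P : ι → Matrix κ κ K) (u : ι × κ → K) (v : κ → K) :
    iterationMatrix γ η P *ᵥ Sum.elim u v =
      Sum.elim (fun q => (1 - γ) * u q + γ * (P q.1 *ᵥ v) q.2)
        (fun j => η * (1 - γ) / Fintype.card ι * ∑ i, u (i, j)
          + η * γ / Fintype.card ι * ((∑ i, P i) *ᵥ v) j + (1 - η) * v j) := by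
  ext (q | j)
  · simp [iterationMatrix, mulVec, dotProduct, Finset.mul_sum, one_apply, mul_assoc]
  · simp [iterationMatrix, mulVec, dotProduct, Finset.mul_sum, one_apply, Fintype.sum_prod_type,
      add_mul, Finset.sum_add_distrib, mul_assoc, add_assoc]

theorem one_sub_mem_spectrum_iterationMatrix [Nontrivial ι] [Nonempty κ] (γ η : K)
    (P : ι → Matrix κ κ K) : 1 - γ ∈ spectrum K (iterationMatrix γ η P) := by
  obtain ⟨i₀, i₁, hi⟩ := exists_pair_ne ι
  obtain ⟨j₀⟩ := ‹Nonempty κ›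
  let u : ι × κ → K := fun q =>
    (Pi.single i₀ (1 : K) - Pi.single i₁ (1 : K) : ι → K) q.1 * (Pi.single j₀ (1 : K) : κ → K) q.2
  rw [mem_spectrum_iff_exists_mulVec_eq_smul]
  refine ⟨Sum.elim u 0, fun h => ?_, ?_⟩
  · simpa [u, hi] using congrFun h (Sum.inl (i₀, j₀))
  · rw [iterationMatrix_mulVec]
    ext (q | j) <;> simp [u, Finset.sum_sub_distrib, ← Finset.sum_mul]

variable [CharZero K] {γ η : K} {P : ι → Matrix κ κ K} {X : Matrix κ κ K}

theorem iterationMatrix_mulVec_eq_smul_iff [Nonempty ι]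
    (hPX : ∑ i, P i = Fintype.card ι • (1 - X)) {z : K} (hz : z + γ - 1 ≠ 0)
    (u : ι × κ → K) (v : κ → K) :
    iterationMatrix γ η P *ᵥ Sum.elim u v = z • Sum.elim u v ↔
      (∀ q, u q = γ / (z + γ - 1) * (P q.1 *ᵥ v) q.2) ∧
        (η * γ * z) • (v - X *ᵥ v) = ((z + γ - 1) * (z + η - 1)) • v := by
  have hcard : (Fintype.card ι : K) ≠ 0 := Nat.cast_ne_zero.mpr Fintype.card_ne_zero
  have hPv : (∑ i, P i) *ᵥ v = (Fintype.card ι : K) • (v - X *ᵥ v) := by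
    rw [hPX, ← Nat.cast_smul_eq_nsmul K, smul_mulVec, sub_mulVec, one_mulVec]
  have hsmul : z • Sum.elim u v = Sum.elim (z • u) (z • v) := by ext (q | j) <;> rfl
  have htop : ∀ q, (1 - γ) * u q + γ * (P q.1 *ᵥ v) q.2 = z * u q ↔
      u q = γ / (z + γ - 1) * (P q.1 *ᵥ v) q.2 := fun q => by
    field_simp
    constructor <;> intro h <;> linear_combination -h
  rw [iterationMatrix_mulVec, hsmul, Sum.elim_eq_iff, funext_iff, funext_iff, funext_iff]
  simp only [Pi.smul_apply, Pi.sub_apply, smul_eq_mul, htop]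
  refine and_congr_right fun hu => forall_congr' fun j => ?_
  have hu_sum : ∑ i, u (i, j) = γ / (z + γ - 1) * (Fintype.card ι * (v j - (X *ᵥ v) j)) := by
    rw [Finset.sum_congr rfl fun i _ => hu (i, j), ← Finset.mul_sum, ← Finset.sum_apply,
      ← sum_mulVec, hPv]
    rfl
  rw [hu_sum, hPv]
  simp only [Pi.smul_apply, Pi.sub_apply, smul_eq_mul]
  field_simp
  constructor <;> intro h <;> linear_combination h

theorem mem_spectrum_iterationMatrix_iff [IsAlgClosed K] [Nonempty ι] [Nonempty κ]
    (hPX : ∑ i, P i = Fintype.card ι • (1 - X)) {z : K} (hz : z ≠ 1 - γ) :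
    z ∈ spectrum K (iterationMatrix γ η P) ↔ ∃ c ∈ spectrum K X, quadratic γ η c z = 0 := by
  have hz' : z + γ - 1 ≠ 0 := fun h => hz (by linear_combination h)
  simp only [mem_spectrum_iff_exists_mulVec_eq_smul]
  constructor
  · rintro ⟨x, hx0, hx⟩
    rw [← Sum.elim_comp_inl_inr x] at hx hx0
    obtain ⟨hu, hv⟩ := (iterationMatrix_mulVec_eq_smul_iff hPX hz' _ _).mp hx
    have hv0 : x ∘ Sum.inr ≠ 0 := fun h0 => hx0 <| by
      ext (q | j)
      · simpa [h0] using hu q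
      · exact congrFun h0 j
    by_cases hηγz : η * γ * z = 0
    -- then `z = 1 - η` is a root of every `quadratic γ η c`, so any eigenvalue of `X` will do
    · obtain ⟨c, hc⟩ := spectrum.nonempty_of_isAlgClosed_of_finiteDimensional K X
      refine ⟨c, (mem_spectrum_iff_exists_mulVec_eq_smul X c).mp hc, ?_⟩
      rw [hηγz, zero_smul] at hv
      rw [quadratic_eq_mul_sub_mul, (smul_eq_zero.mp hv.symm).resolve_right hv0, hηγz]
      ring
    · simp only [mul_eq_zero, not_or] at hηγz
      obtain ⟨⟨hη, hγ⟩, hz0⟩ := hηγz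
      refine ⟨1 - (z + γ - 1) * (z + η - 1) / (η * γ * z), ⟨x ∘ Sum.inr, hv0, ?_⟩, ?_⟩
      · ext j
        have hj := congrFun hv j
        simp only [Pi.smul_apply, Pi.sub_apply, smul_eq_mul] at hj ⊢
        field_simp
        linear_combination -hj
      · rw [quadratic_eq_mul_sub_mul]
        field_simp
        ring
  · rintro ⟨c, ⟨v, hv0, hXv⟩, hc⟩
    refine ⟨Sum.elim (fun q => γ / (z + γ - 1) * (P q.1 *ᵥ v) q.2) v,
      fun h => hv0 (by simpa using congrArg (· ∘ Sum.inr) h),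
      (iterationMatrix_mulVec_eq_smul_iff hPX hz' _ _).mpr ⟨fun q => rfl, ?_⟩⟩
    rw [hXv, show v - c • v = (1 - c) • v by rw [sub_smul, one_smul], smul_smul]
    rw [quadratic_eq_mul_sub_mul, sub_eq_zero] at hc
    rw [hc]

theorem spectrum_iterationMatrix [IsAlgClosed K] [Nontrivial ι] [Nonempty κ]
    (hPX : ∑ i, P i = Fintype.card ι • (1 - X)) :
    spectrum K (iterationMatrix γ η P) =
      insert (1 - γ) {z | ∃ c ∈ spectrum K X, quadratic γ η c z = 0} := by
  ext z
  by_cases hz : z = 1 - γ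
  · simp [hz, one_sub_mem_spectrum_iterationMatrix]
  · rw [Set.mem_insert_iff, or_iff_right hz, mem_spectrum_iterationMatrix_iff hPX hz]
    rfl

end APC

open APC in
theorem apc_iteration_matrix_spectral_radius_general
    {n p m : ℕ} (hn : 0 < n) (hm : 2 ≤ m)
    (A : Fin m → Matrix (Fin p) (Fin n) ℝ)
    (γ η : ℝ)
    (P : Fin m → Matrix (Fin n) (Fin n) ℝ)
    (hP : ∀ i, P i = 1 - (A i)ᵀ * (A i * (A i)ᵀ)⁻¹ * A i)
    (X : Matrix (Fin n) (Fin n) ℝ)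
    (hX : X = ((m : ℝ))⁻¹ • ∑ i, (A i)ᵀ * (A i * (A i)ᵀ)⁻¹ * A i)
    (hXh : X.IsHermitian)
    (M : Matrix (Fin n) (Fin n) ℝ)
    (hM : M = (η * γ / m) • ∑ i, P i + (1 - η) • (1 : Matrix (Fin n) (Fin n) ℝ))
    (B : Matrix (Fin m × Fin n ⊕ Fin n) (Fin m × Fin n ⊕ Fin n) ℝ)
    (hB : B = Matrix.fromBlocks
        ((1 - γ) • (1 : Matrix (Fin m × Fin n) (Fin m × Fin n) ℝ))
        (fun q j => γ * P q.1 q.2 j)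
        (fun j q => (η * (1 - γ) / m) * (1 : Matrix (Fin n) (Fin n) ℝ) j q.2)
        M) :
    sSup {r : ℝ | ∃ z ∈ spectrum ℂ (B.map (algebraMap ℝ ℂ)), ‖z‖ = r}
      = max |1 - γ|
          (sSup {r : ℝ | ∃ i : Fin n, ∃ z : ℂ,
            z ^ 2
              + ((γ : ℂ) + (η : ℂ) - 2 - (η : ℂ) * (γ : ℂ) * (1 - (hXh.eigenvalues i : ℂ))) * z
              + ((γ : ℂ) - 1) * ((η : ℂ) - 1) = 0 ∧ ‖z‖ = r}) := by
  have : Nontrivial (Fin m) := Fin.nontrivial_iff_two_le.mpr hm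
  have : Nonempty (Fin n) := ⟨⟨0, hn⟩⟩
  have hQ : ∑ i, (A i)ᵀ * (A i * (A i)ᵀ)⁻¹ * A i = (m : ℝ) • X := by
    rw [hX, smul_inv_smul₀ (by positivity)]
  have hPX : ∑ i, P i = Fintype.card (Fin m) • (1 - X) := by
    simp only [hP, Finset.sum_sub_distrib, Finset.sum_const, Finset.card_univ, smul_sub, hQ,
      Fintype.card_fin, Nat.cast_smul_eq_nsmul]
  have hPX' : ∑ i, (P i).map (algebraMap ℝ ℂ) =
      Fintype.card (Fin m) • (1 - X.map (algebraMap ℝ ℂ)) := by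
    simpa only [map_sum, map_nsmul, map_sub, map_one, RingHom.mapMatrix_apply]
      using congrArg (algebraMap ℝ ℂ).mapMatrix hPX
  have hBP : B = iterationMatrix γ η P := by
    rw [hB, hM, iterationMatrix, Fintype.card_fin]
    rfl
  set R := {z : ℂ | ∃ i, quadratic (γ : ℂ) η (hXh.eigenvalues i) z = 0}
  have hspec : spectrum ℂ (B.map (algebraMap ℝ ℂ)) = insert (1 - γ : ℂ) R := by
    rw [hBP, iterationMatrix_map, spectrum_iterationMatrix hPX',
      hXh.spectrum_map_algebraMap_eq_range]
    simp [R]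
  have hR_finite : R.Finite := (finite_spectrum _).subset (hspec ▸ Set.subset_insert _ _)
  have hR_nonempty : R.Nonempty :=
    let ⟨z, hz⟩ := exists_quadratic_eq_zero (γ : ℂ) η (hXh.eigenvalues ⟨0, hn⟩)
    ⟨z, ⟨0, hn⟩, hz⟩
  calc sSup {r : ℝ | ∃ z ∈ spectrum ℂ (B.map (algebraMap ℝ ℂ)), ‖z‖ = r}
      = sSup (norm '' insert (1 - γ : ℂ) R) := by rw [hspec]; rfl
    _ = max ‖(1 - γ : ℂ)‖ (sSup (norm '' R)) := hR_finite.sSup_norm_image_insert _ hR_nonempty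
    _ = _ := by
      congr 1
      · exact_mod_cast Complex.norm_real (1 - γ)
      · congr 1
        ext r
        simp only [R, quadratic, Set.mem_image, Set.mem_ofPred_eq]
        exact ⟨fun ⟨z, ⟨i, hz⟩, hr⟩ => ⟨i, z, hz, hr⟩, fun ⟨i, z, hz, hr⟩ => ⟨z, ⟨i, hz⟩, hr⟩⟩

/-- For `γ ∈ (0,2)` and `m ≥ 2`, the spectral radius of the APC iteration
matrix `B` equals the maximum of `|1−γ|` and the maximal modulus, over the eigenvalues
`μ_i` of `X`, of the complex roots of
`p_{μ_i}(λ) = λ² + (γ+η−2−ηγ(1−μ_i))λ + (γ−1)(η−1)`. -/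
theorem apc_iteration_matrix_spectral_radius
    {n p m : ℕ} (hn : 0 < n) (hm : 2 ≤ m)
    (A : Fin m → Matrix (Fin p) (Fin n) ℝ)
    (hfr : ∀ i, Invertible (A i * (A i)ᵀ))
    (γ η : ℝ) (hγ : 0 < γ) (hγ' : γ < 2)
    (P : Fin m → Matrix (Fin n) (Fin n) ℝ)
    (hP : ∀ i, P i = 1 - (A i)ᵀ * (A i * (A i)ᵀ)⁻¹ * A i)
    (X : Matrix (Fin n) (Fin n) ℝ)
    (hX : X = ((m : ℝ))⁻¹ • ∑ i, (A i)ᵀ * (A i * (A i)ᵀ)⁻¹ * A i)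
    (hXh : X.IsHermitian)
    (M : Matrix (Fin n) (Fin n) ℝ)
    (hM : M = (η * γ / m) • ∑ i, P i + (1 - η) • (1 : Matrix (Fin n) (Fin n) ℝ))
    (B : Matrix (Fin m × Fin n ⊕ Fin n) (Fin m × Fin n ⊕ Fin n) ℝ)
    (hB : B = Matrix.fromBlocks
        ((1 - γ) • (1 : Matrix (Fin m × Fin n) (Fin m × Fin n) ℝ))
        (fun q j => γ * P q.1 q.2 j)
        (fun j q => (η * (1 - γ) / m) * (1 : Matrix (Fin n) (Fin n) ℝ) j q.2)
        M) :
    sSup {r : ℝ | ∃ z ∈ spectrum ℂ (B.map (algebraMap ℝ ℂ)), ‖z‖ = r}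
      = max |1 - γ|
          (sSup {r : ℝ | ∃ i : Fin n, ∃ z : ℂ,
            z ^ 2
              + ((γ : ℂ) + (η : ℂ) - 2 - (η : ℂ) * (γ : ℂ) * (1 - (hXh.eigenvalues i : ℂ))) * z
              + ((γ : ℂ) - 1) * ((η : ℂ) - 1) = 0 ∧ ‖z‖ = r}) :=
  apc_iteration_matrix_spectral_radius_general hn hm A γ η P hP X hX hXh M hM B hB
end

section
/- Suppose |1−γ| < 1 and, for every eigenvalue μ_i of X, every complex root of the quadratic p_{μ_i}(λ) = λ² + (γ + η − 2 − ηγ(1−μ_i)) λ + (γ−1)(η−1) has modulus strictly less than 1. Then for any initialization satisfying A_i x_i(0) = b_i for all i and any x̄(0) ∈ ℝ^n, the APC iterates converge to the solution: x̄(t) → x* and x_i(t) → x* for every i as t → ∞. -/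
/-!
Write `eᵢ(t) = xᵢ(t) - x*` and `ē(t) = x̄(t) - x*`. The constraint `Aᵢ xᵢ(t) = bᵢ` is preserved,
so `eᵢ(t) ∈ ker Aᵢ` is fixed by `Pᵢ` and `eᵢ(t+1) = (1-γ) eᵢ(t) + γ Pᵢ ē(t)`. Averaging over `i`
with `(1/m) ∑ Pᵢ = I - X` and eliminating the mean local error gives the closed recurrence
`ē(t+2) = ((2-γ-η+ηγ) I - ηγ X) ē(t+1) - (1-γ)(1-η) ē(t)`.
In an orthonormal eigenbasis of the symmetric matrix `X` it splits into scalar recurrences whose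
characteristic polynomial, in the eigendirection of `μ`, is `p_μ`; hence `ē(t) → 0`. Then each
`eᵢ` is driven by the contraction `|1-γ| < 1` and the vanishing input `γ Pᵢ ē(t)`, so `eᵢ(t) → 0`.
-/

open Matrix Filter Topology

theorem tendsto_zero_of_le_mul_add {ρ : ℝ} (hρ₀ : 0 ≤ ρ) (hρ₁ : ρ < 1) {a b : ℕ → ℝ}
    (ha : ∀ t, 0 ≤ a t) (hb : Tendsto b atTop (𝓝 0)) (hab : ∀ t, a (t + 1) ≤ ρ * a t + b t) :
    Tendsto a atTop (𝓝 0) := by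
  refine tendsto_order.2 ⟨fun ε hε => .of_forall fun t => hε.trans_le (ha t), fun ε hε => ?_⟩
  have hδ : 0 < ε / 2 * (1 - ρ) := by nlinarith
  obtain ⟨N, hN⟩ := eventually_atTop.1 (hb.eventually (gt_mem_nhds hδ))
  have hcontract : ∀ k, a (N + k) ≤ ρ ^ k * a N + ε / 2 := by
    intro k
    induction k with
    | zero => simp only [add_zero, pow_zero, one_mul]; linarith
    | succ k ih =>
      calc a (N + (k + 1)) ≤ ρ * a (N + k) + b (N + k) := hab (N + k)
        _ ≤ ρ * (ρ ^ k * a N + ε / 2) + ε / 2 * (1 - ρ) := by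
          gcongr; exact (hN _ (Nat.le_add_right N k)).le
        _ = ρ ^ (k + 1) * a N + ε / 2 := by ring
  have hgeom : Tendsto (fun k => ρ ^ k * a N) atTop (𝓝 0) := by
    simpa using (tendsto_pow_atTop_nhds_zero_of_lt_one hρ₀ hρ₁).mul_const (a N)
  obtain ⟨K, hK⟩ := eventually_atTop.1 (hgeom.eventually (gt_mem_nhds (half_pos hε)))
  refine eventually_atTop.2 ⟨N + K, fun t ht => ?_⟩
  obtain ⟨k, rfl⟩ := Nat.exists_eq_add_of_le (le_of_add_le_left ht)
  linarith [hcontract k, hK k (by omega)]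

theorem tendsto_zero_of_eq_smul_add {𝕜 E : Type*} [NormedField 𝕜] [SeminormedAddCommGroup E]
    [NormedSpace 𝕜 E] {r : 𝕜} (hr : ‖r‖ < 1) {u f : ℕ → E} (hf : Tendsto f atTop (𝓝 0))
    (hu : ∀ t, u (t + 1) = r • u t + f t) : Tendsto u atTop (𝓝 0) := by
  refine tendsto_zero_iff_norm_tendsto_zero.2 <| tendsto_zero_of_le_mul_add (norm_nonneg r) hr
    (fun t => norm_nonneg _) (tendsto_zero_iff_norm_tendsto_zero.1 hf) fun t => ?_
  calc ‖u (t + 1)‖ ≤ ‖r • u t‖ + ‖f t‖ := hu t ▸ norm_add_le _ _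
    _ = ‖r‖ * ‖u t‖ + ‖f t‖ := by rw [norm_smul]

theorem tendsto_zero_of_linear_recurrence_two {E : Type*} [SeminormedAddCommGroup E]
    [NormedSpace ℂ E] {a b : ℂ} (hroots : ∀ z : ℂ, z ^ 2 - a * z - b = 0 → ‖z‖ < 1)
    {u : ℕ → E} (hu : ∀ t, u (t + 2) = a • u (t + 1) + b • u t) : Tendsto u atTop (𝓝 0) := by
  obtain ⟨s, hs⟩ := IsAlgClosed.exists_eq_mul_self (a ^ 2 + 4 * b)
  set z₁ := (a + s) / 2
  set z₂ := a - z₁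
  have hz₁ : z₁ ^ 2 - a * z₁ - b = 0 := by linear_combination (-1 / 4 : ℂ) * hs
  have hb : b = -(z₁ * z₂) := by linear_combination -hz₁
  have hz₂ : z₂ ^ 2 - a * z₂ - b = 0 := by linear_combination hz₁
  -- `z ^ 2 - a z - b = (z - z₁) (z - z₂)`: the recurrence factors into two first-order ones
  have hd : Tendsto (fun t => u (t + 1) - z₂ • u t) atTop (𝓝 0) := by
    refine tendsto_zero_of_eq_smul_add (hroots z₁ hz₁) tendsto_const_nhds fun t => ?_
    rw [hu, hb]
    module
  exact tendsto_zero_of_eq_smul_add (hroots z₂ hz₂) hd fun t => by abel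

namespace Matrix

theorem IsHermitian.star_eigenvectorUnitary_mulVec_mulVec {𝕜 ι : Type*} [RCLike 𝕜]
    [Fintype ι] [DecidableEq ι] {A : Matrix ι ι 𝕜} (hA : A.IsHermitian) (v : ι → 𝕜) (k : ι) :
    (star (hA.eigenvectorUnitary : Matrix ι ι 𝕜) *ᵥ (A *ᵥ v)) k
      = hA.eigenvalues k * (star (hA.eigenvectorUnitary : Matrix ι ι 𝕜) *ᵥ v) k := by
  have hdiag : star (hA.eigenvectorUnitary : Matrix ι ι 𝕜) * A =
      diagonal (RCLike.ofReal ∘ hA.eigenvalues) * star (hA.eigenvectorUnitary : Matrix ι ι 𝕜) := by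
    rw [← hA.conjStarAlgAut_star_eigenvectorUnitary, Unitary.conjStarAlgAut_star_apply,
      Matrix.mul_assoc _ _ (star _), Unitary.mul_star_self_of_mem hA.eigenvectorUnitary.2,
      Matrix.mul_one]
  rw [mulVec_mulVec, hdiag, ← mulVec_mulVec, mulVec_diagonal]
  rfl

theorem IsHermitian.tendsto_zero_of_recurrence {ι : Type*} [Fintype ι] [DecidableEq ι]
    {X : Matrix ι ι ℝ} (hX : X.IsHermitian) {a b c : ℝ}
    (hroots : ∀ μ ∈ spectrum ℝ X, ∀ z : ℂ, z ^ 2 - (a + b * μ) * z - c = 0 → ‖z‖ < 1)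
    {w : ℕ → ι → ℝ} (hw : ∀ t, w (t + 2) = a • w (t + 1) + b • X *ᵥ w (t + 1) + c • w t) :
    Tendsto w atTop (𝓝 0) := by
  have hdiag := hX.star_eigenvectorUnitary_mulVec_mulVec
  set U : Matrix ι ι ℝ := (hX.eigenvectorUnitary : Matrix ι ι ℝ)
  have hcoord : ∀ k, Tendsto (fun t => (star U *ᵥ w t) k) atTop (𝓝 0) := by
    intro k
    have hroots_k : ∀ z : ℂ, z ^ 2 - ↑(a + b * hX.eigenvalues k) * z - c = 0 → ‖z‖ < 1 :=
      fun z hz => hroots _ (hX.eigenvalues_mem_spectrum_real k) z (by exact_mod_cast hz)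
    have hℂ := tendsto_zero_of_linear_recurrence_two hroots_k
      (u := fun t => ((star U *ᵥ w t) k : ℂ)) fun t => by
        simp only [hw, mulVec_add, mulVec_smul, Pi.add_apply, Pi.smul_apply, smul_eq_mul,
          hdiag, RCLike.ofReal_real_eq_id, id]
        push_cast
        ring
    simpa [Function.comp_def] using (Complex.continuous_re.tendsto 0).comp hℂ
  have hw_eq : ∀ t, w t = U *ᵥ (star U *ᵥ w t) := fun t => by
    rw [mulVec_mulVec, Unitary.mul_star_self_of_mem hX.eigenvectorUnitary.2, one_mulVec]
  simpa [Function.comp_def, ← hw_eq] using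
    ((continuous_const (y := U)).matrix_mulVec continuous_id |>.tendsto 0).comp
      (tendsto_pi_nhds.2 hcoord)

variable {R ι κ : Type*} [CommRing R] [Fintype ι] [Fintype κ] [DecidableEq κ]

theorem mul_transpose_mul_nonsing_inv_mul (A : Matrix κ ι R) [Invertible (A * Aᵀ)] :
    A * (Aᵀ * (A * Aᵀ)⁻¹ * A) = A := by
  rw [← Matrix.mul_assoc, ← Matrix.mul_assoc, mul_inv_of_invertible, Matrix.one_mul]

theorem isSymm_transpose_mul_nonsing_inv_mul (A : Matrix κ ι R) :
    (Aᵀ * (A * Aᵀ)⁻¹ * A).IsSymm := by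
  rw [IsSymm, transpose_mul, transpose_mul, transpose_nonsing_inv, transpose_mul,
    transpose_transpose, Matrix.mul_assoc]

end Matrix

namespace APC

variable {R ι κ : Type*} [CommRing R] [Fintype ι] [Fintype κ] [DecidableEq ι] [DecidableEq κ]

theorem localError_succ (A : Matrix κ ι R) [Invertible (A * Aᵀ)] {b : κ → R} {xstar : ι → R}
    (hsol : A *ᵥ xstar = b) {P : Matrix ι ι R} (hP : P = 1 - Aᵀ * (A * Aᵀ)⁻¹ * A) (γ : R)
    {x y : ℕ → ι → R} (hx : ∀ t, x (t + 1) = x t + γ • P *ᵥ (y t - x t)) (h₀ : A *ᵥ x 0 = b)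
    (t : ℕ) : x (t + 1) - xstar = (1 - γ) • (x t - xstar) + γ • P *ᵥ (y t - xstar) := by
  have hAP : A * P = 0 := by
    rw [hP, Matrix.mul_sub, Matrix.mul_one, Matrix.mul_transpose_mul_nonsing_inv_mul, sub_self]
  have hfeasible : ∀ t, A *ᵥ x t = b := by
    intro t
    induction t with
    | zero => exact h₀
    | succ t ih =>
      rw [hx, mulVec_add, mulVec_smul, mulVec_mulVec, hAP, zero_mulVec, smul_zero, add_zero, ih]
  have hfix : P *ᵥ (x t - xstar) = x t - xstar := by
    rw [hP, sub_mulVec, one_mulVec, ← mulVec_mulVec, mulVec_sub, hfeasible, hsol, sub_self,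
      mulVec_zero, sub_zero]
  rw [hx, show y t - x t = (y t - xstar) - (x t - xstar) by abel, mulVec_sub, hfix]
  module

theorem meanError_succ {K : Type*} [Field K] [CharZero K] {m : ℕ} (hm : m ≠ 0)
    {Q : Fin m → Matrix κ κ K} {γ : K} {e e' : Fin m → κ → K} {w : κ → K}
    (he : ∀ i, e' i = (1 - γ) • e i + γ • (1 - Q i) *ᵥ w) :
    (m : K)⁻¹ • ∑ i, e' i
      = (1 - γ) • ((m : K)⁻¹ • ∑ i, e i) + γ • (w - ((m : K)⁻¹ • ∑ i, Q i) *ᵥ w) := by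
  have hm' : (m : K) ≠ 0 := Nat.cast_ne_zero.2 hm
  simp only [he, Finset.sum_add_distrib, ← Finset.smul_sum, ← sum_mulVec, Finset.sum_sub_distrib,
    Finset.sum_const, Finset.card_univ, Fintype.card_fin, sub_mulVec, smul_mulVec, one_mulVec]
  rw [← Nat.cast_smul_eq_nsmul K]
  linear_combination (norm := module) γ • inv_smul_smul₀ hm' w

theorem globalError_succ {K V : Type*} [Field K] [CharZero K] [AddCommGroup V] [Module K V]
    {m : ℕ} (hm : m ≠ 0) {η : K} {x : Fin m → V} {xbar xbar' xstar : V}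
    (h : xbar' = (η / m) • ∑ i, x i + (1 - η) • xbar) :
    xbar' - xstar = η • ((m : K)⁻¹ • ∑ i, (x i - xstar)) + (1 - η) • (xbar - xstar) := by
  have hm' : (m : K) ≠ 0 := Nat.cast_ne_zero.2 hm
  rw [h, Finset.sum_sub_distrib, Finset.sum_const, Finset.card_univ, Fintype.card_fin,
    ← Nat.cast_smul_eq_nsmul K]
  linear_combination (norm := module) η • inv_smul_smul₀ hm' xstar

theorem globalError_two_step {K V : Type*} [CommRing K] [AddCommGroup V] [Module K V]
    (L : V → V) {γ η : K} {s w : ℕ → V}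
    (hs : ∀ t, s (t + 1) = (1 - γ) • s t + γ • (w t - L (w t)))
    (hw : ∀ t, w (t + 1) = η • s (t + 1) + (1 - η) • w t) (t : ℕ) :
    w (t + 2) = (2 - γ - η + η * γ) • w (t + 1) + (-(η * γ)) • L (w (t + 1))
      + (-((1 - γ) * (1 - η))) • w t := by
  rw [hw (t + 1), hs (t + 1)]
  linear_combination (norm := module) (γ - 1) • hw t

end APC

/-- If `|1−γ| < 1` and for every eigenvalue `μ` of `X` every complex root of
`λ² + (γ+η−2−ηγ(1−μ))λ + (γ−1)(η−1)` has modulus `< 1`, then the APC iterates converge to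
the unique solution `x*`. -/
theorem apc_convergence
    {n p m : ℕ}
    (A : Fin m → Matrix (Fin p) (Fin n) ℝ)
    (b : Fin m → Fin p → ℝ)
    (hfr : ∀ i, Invertible (A i * (A i)ᵀ))
    (xstar : Fin n → ℝ)
    (hsol : ∀ i, (A i).mulVec xstar = b i)
    (huniq : ∀ y : Fin n → ℝ, (∀ i, (A i).mulVec y = b i) → y = xstar)
    (γ η : ℝ)
    (P : Fin m → Matrix (Fin n) (Fin n) ℝ)
    (hP : ∀ i, P i = 1 - (A i)ᵀ * (A i * (A i)ᵀ)⁻¹ * A i)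
    (X : Matrix (Fin n) (Fin n) ℝ)
    (hX : X = ((m : ℝ))⁻¹ • ∑ i, (A i)ᵀ * (A i * (A i)ᵀ)⁻¹ * A i)
    (hγ : |1 - γ| < 1)
    (hroots : ∀ μ ∈ spectrum ℝ X, ∀ z : ℂ,
      z ^ 2 + ((γ : ℂ) + (η : ℂ) - 2 - (η : ℂ) * (γ : ℂ) * (1 - (μ : ℂ))) * z
        + ((γ : ℂ) - 1) * ((η : ℂ) - 1) = 0 → ‖z‖ < 1)
    (x : ℕ → Fin m → Fin n → ℝ)
    (xbar : ℕ → Fin n → ℝ)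
    (hx : ∀ t i, x (t + 1) i = x t i + γ • (P i).mulVec (xbar t - x t i))
    (hxbar : ∀ t, xbar (t + 1) = (η / m) • ∑ i, x (t + 1) i + (1 - η) • xbar t)
    (hinit : ∀ i, (A i).mulVec (x 0 i) = b i) :
    Filter.Tendsto xbar Filter.atTop (nhds xstar) ∧
      ∀ i, Filter.Tendsto (fun t => x t i) Filter.atTop (nhds xstar) := by
  rcases eq_or_ne m 0 with rfl | hm
  · exact ⟨tendsto_const_nhds.congr fun t => (huniq (xbar t) finZeroElim).symm, finZeroElim⟩
  have hlocal (t : ℕ) (i : Fin m) :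
      x (t + 1) i - xstar = (1 - γ) • (x t i - xstar) + γ • P i *ᵥ (xbar t - xstar) :=
    letI := hfr i
    APC.localError_succ (A i) (hsol i) (hP i) γ (x := (x · i)) (hx · i) (hinit i) t
  have hmean := fun t => APC.meanError_succ hm fun i => hP i ▸ hlocal t i
  rw [← hX] at hmean
  have hXsymm : X.IsHermitian := isHermitian_iff_isSymm.2 <| hX ▸
    (Finset.sum_induction _ IsSymm (fun _ _ => .add) isSymm_zero
      fun i _ => isSymm_transpose_mul_nonsing_inv_mul (A i)).smul _
  have hglobal : Tendsto (xbar · - xstar) atTop (𝓝 0) :=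
    hXsymm.tendsto_zero_of_recurrence (a := 2 - γ - η + η * γ) (b := -(η * γ))
      (c := -((1 - γ) * (1 - η)))
      (fun μ hμ z hz => hroots μ hμ z (by push_cast at hz; linear_combination hz))
      (APC.globalError_two_step (X *ᵥ ·) (s := fun t => (m : ℝ)⁻¹ • ∑ i, (x t i - xstar))
        hmean fun t => APC.globalError_succ hm (hxbar t))
  refine ⟨tendsto_sub_nhds_zero_iff.1 hglobal, fun i => tendsto_sub_nhds_zero_iff.1 ?_⟩
  refine tendsto_zero_of_eq_smul_add (by rwa [Real.norm_eq_abs]) ?_ (hlocal · i)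
  have hP_cont : Continuous (P i *ᵥ ·) := continuous_const.matrix_mulVec continuous_id
  simpa using ((hP_cont.tendsto 0).comp hglobal).const_smul γ
end

section
/- Let 0 < μ_min ≤ μ_max and set κ = μ_max/μ_min. For every choice of real parameters γ, η there exists μ ∈ {μ_min, μ_max} and a complex root λ of the quadratic λ² + (γ + η − 2 − ηγ(1−μ)) λ + (γ−1)(η−1) with |λ| ≥ (√κ − 1)/(√κ + 1). In other words, no choice of parameters makes the maximal root modulus over μ ∈ {μ_min, μ_max} smaller than (√κ − 1)/(√κ + 1). -/
/-!
If both extreme quadratics (at `μ_min` and `μ_max`) had all their roots in the open disc of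
radius `r`, evaluating `z² + b z + c = (z - z₁)(z - z₂)` at `z = ±r` and at `0` would give
`0 < r² ± b r + c` and `c < r²`. Since `b = γημ - (1 + c)` is affine in `μ`, the condition at
`μ_min` bounds `γη` from below and the one at `μ_max` bounds it from above, and the two bounds
are compatible only if `κ (1 - r)² < (1 + r)²`. For `r = (√κ - 1)/(√κ + 1)` this is an
equality.
-/

open Polynomial in
theorem exists_quadratic_factorization {K : Type*} [Field K] [IsAlgClosed K] (b c : K) :
    ∃ z₁ z₂ : K, ∀ z, z ^ 2 + b * z + c = (z - z₁) * (z - z₂) := by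
  obtain ⟨z₁, hz₁⟩ := IsAlgClosed.exists_root (C 1 * X ^ 2 + C b * X + C c)
    (by rw [degree_quadratic one_ne_zero]; decide)
  simp only [IsRoot, eval_add, eval_mul, eval_C, eval_pow, eval_X, one_mul] at hz₁
  exact ⟨z₁, -b - z₁, fun z => by linear_combination hz₁⟩

theorem Complex.pos_of_mul_eq_ofReal {w₁ w₂ : ℂ} {t : ℝ} (h : w₁ * w₂ = t)
    (h₁ : 0 < w₁.re) (h₂ : 0 < w₂.re) : 0 < t := by
  have hre : w₁.re * w₂.re - w₁.im * w₂.im = t := by simpa using congrArg Complex.re h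
  have him : w₁.re * w₂.im + w₁.im * w₂.re = 0 := by simpa using congrArg Complex.im h
  have hnormSq : w₁.re * t = (w₁.re ^ 2 + w₁.im ^ 2) * w₂.re := by
    linear_combination (-1 : ℝ) * w₁.re * hre - w₁.im * him
  have : 0 < w₁.re * t := hnormSq ▸ by positivity
  exact pos_of_mul_pos_right this h₁.le

def QuadraticRootsInBall (b c r : ℝ) : Prop :=
  ∀ z : ℂ, z ^ 2 + b * z + c = 0 → ‖z‖ < r

namespace QuadraticRootsInBall

variable {b c r : ℝ}

theorem exists_factorization (h : QuadraticRootsInBall b c r) :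
    ∃ z₁ z₂ : ℂ, ‖z₁‖ < r ∧ ‖z₂‖ < r ∧ ∀ z, z ^ 2 + b * z + c = (z - z₁) * (z - z₂) := by
  obtain ⟨z₁, z₂, hfac⟩ := exists_quadratic_factorization (b : ℂ) c
  exact ⟨z₁, z₂, h z₁ (by simp [hfac]), h z₂ (by simp [hfac]), hfac⟩

theorem pos (h : QuadraticRootsInBall b c r) : 0 < r := by
  obtain ⟨z₁, -, hz₁, -⟩ := h.exists_factorization
  exact (norm_nonneg z₁).trans_lt hz₁

theorem lt_sq (h : QuadraticRootsInBall b c r) : c < r ^ 2 := by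
  obtain ⟨z₁, z₂, hz₁, hz₂, hfac⟩ := h.exists_factorization
  have hc : (c : ℂ) = z₁ * z₂ := by simpa using hfac 0
  calc c ≤ ‖(c : ℂ)‖ := by simpa using le_abs_self c
    _ = ‖z₁‖ * ‖z₂‖ := by rw [hc, norm_mul]
    _ < r ^ 2 := by rw [sq]; exact mul_lt_mul'' hz₁ hz₂ (norm_nonneg _) (norm_nonneg _)

theorem eval_pos (h : QuadraticRootsInBall b c r) : 0 < r ^ 2 + b * r + c := by
  obtain ⟨z₁, z₂, hz₁, hz₂, hfac⟩ := h.exists_factorization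
  refine Complex.pos_of_mul_eq_ofReal (w₁ := r - z₁) (w₂ := r - z₂) ?_ ?_ ?_
  · push_cast; exact (hfac r).symm
  · simpa using (Complex.re_le_norm z₁).trans_lt hz₁
  · simpa using (Complex.re_le_norm z₂).trans_lt hz₂

theorem neg : QuadraticRootsInBall b c r → QuadraticRootsInBall (-b) c r := fun h z hz =>
  by simpa using h (-z) (by push_cast at hz ⊢; linear_combination hz)

theorem eval_neg_pos (h : QuadraticRootsInBall b c r) : 0 < r ^ 2 - b * r + c := by
  simpa [← sub_eq_add_neg] using h.neg.eval_pos

end QuadraticRootsInBall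

/-- The APC quadratics have `b = x μ - (1 + c)` with `x = γη`, `c = (γ - 1)(η - 1)`. -/
theorem div_mul_sq_one_sub_lt_of_quadraticRootsInBall {x c r μmin μmax : ℝ}
    (h0 : 0 < μmin) (h1 : μmin ≤ μmax) (hr1 : r < 1)
    (hmin : QuadraticRootsInBall (x * μmin - (1 + c)) c r)
    (hmax : QuadraticRootsInBall (x * μmax - (1 + c)) c r) :
    μmax / μmin * (1 - r) ^ 2 < (1 + r) ^ 2 := by
  have hr := hmin.pos
  have hc := hmin.lt_sq
  have hlower : (1 - r) * (r - c) < x * μmin * r := by linarith [hmin.eval_pos]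
  have hupper : x * μmax * r < (1 + r) * (r + c) := by linarith [hmax.eval_neg_pos]
  have hrc : 0 < r - c := by nlinarith
  have hμ : μmax * ((1 - r) * (r - c)) < μmin * ((1 + r) * (r + c)) := by
    nlinarith [mul_lt_mul_of_pos_left hlower (h0.trans_le h1), mul_lt_mul_of_pos_left hupper h0]
  rw [div_mul_eq_mul_div, div_lt_iff₀ h0]
  refine lt_of_mul_lt_mul_right ?_ hrc.le
  calc μmax * (1 - r) ^ 2 * (r - c) = μmax * ((1 - r) * (r - c)) * (1 - r) := by ring
    _ < μmin * ((1 + r) * (r + c)) * (1 - r) := mul_lt_mul_of_pos_right hμ (by linarith)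
    _ ≤ (1 + r) ^ 2 * μmin * (r - c) := by
      nlinarith [mul_pos (mul_pos h0 (by linarith : 0 < 1 + r)) (sub_pos.2 hc)]

theorem mul_one_sub_div_add_one {q : ℝ} (hq : q + 1 ≠ 0) :
    q * (1 - (q - 1) / (q + 1)) = 1 + (q - 1) / (q + 1) := by
  field_simp
  ring

/-- With `0 < μ_min ≤ μ_max` and `κ = μ_max/μ_min`, for every choice of real
parameters `γ, η` there is `μ ∈ {μ_min, μ_max}` and a complex root `λ` of
`λ² + (γ+η−2−ηγ(1−μ))λ + (γ−1)(η−1)` with `|λ| ≥ (√κ − 1)/(√κ + 1)`. -/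
theorem apc_rate_lower_bound
    (μmin μmax : ℝ) (h0 : 0 < μmin) (h1 : μmin ≤ μmax)
    (κ : ℝ) (hκ : κ = μmax / μmin) :
    ∀ γ η : ℝ, ∃ μ ∈ ({μmin, μmax} : Set ℝ), ∃ z : ℂ,
      z ^ 2 + ((γ : ℂ) + (η : ℂ) - 2 - (η : ℂ) * (γ : ℂ) * (1 - (μ : ℂ))) * z
        + ((γ : ℂ) - 1) * ((η : ℂ) - 1) = 0 ∧
      (Real.sqrt κ - 1) / (Real.sqrt κ + 1) ≤ ‖z‖ := by
  intro γ η
  by_contra! h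
  set r := (Real.sqrt κ - 1) / (Real.sqrt κ + 1)
  have hroots : ∀ μ ∈ ({μmin, μmax} : Set ℝ),
      QuadraticRootsInBall (γ * η * μ - (1 + (γ - 1) * (η - 1))) ((γ - 1) * (η - 1)) r :=
    fun μ hμ z hz => h μ hμ z (by push_cast at hz; linear_combination hz)
  have hr1 : r < 1 := (div_lt_one (by positivity)).2 (by linarith)
  have hlt := div_mul_sq_one_sub_lt_of_quadraticRootsInBall h0 h1 hr1
    (hroots μmin (by simp)) (hroots μmax (by simp))
  have hκ0 : 0 ≤ κ := hκ ▸ div_nonneg (h0.le.trans h1) h0.le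
  have heq : κ * (1 - r) ^ 2 = (1 + r) ^ 2 := by
    rw [← Real.sq_sqrt hκ0, ← mul_pow, mul_one_sub_div_add_one (by positivity)]
  rw [← hκ, heq] at hlt
  exact lt_irrefl _ hlt
end

section
/- The block Cimmino error satisfies x̄(t+1) − x* = (I_n − ν m X)(x̄(t) − x*) for all t. Moreover, if X is positive definite with smallest and largest eigenvalues μ_min and μ_max and κ = μ_max/μ_min, then choosing ν = 2/(m(μ_max + μ_min)) gives ‖x̄(t) − x*‖ ≤ ((κ−1)/(κ+1))^t ‖x̄(0) − x*‖ for all t ≥ 0. -/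
open Matrix

/-!
Substituting `b i = A i x*` turns the iteration into `e (t+1) = (1 - c X) e t` for the error
`e t = x̄ t - x*`, where `c = ν m = 2 / (μ_max + μ_min)`. The matrix `1 - c X` is symmetric and,
by spectral mapping, its spectrum is `{1 - c μ | μ ∈ σ(X)} ⊆ [-ρ, ρ]` with
`ρ = (μ_max - μ_min) / (μ_max + μ_min) = (κ - 1) / (κ + 1)`. For a self-adjoint operator the
operator norm equals the spectral radius, so each step contracts the Euclidean norm of the error
by the factor `ρ`.
-/

theorem add_smul_sum_mulVec_sub_sub_eq {ι R n p : Type*} [Fintype ι] [CommRing R] [Fintype n]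
    [Fintype p] [DecidableEq n] (P : ι → Matrix n p R) (A : ι → Matrix p n R) (b : ι → p → R)
    {xstar : n → R} (hsol : ∀ i, A i *ᵥ xstar = b i) (ν : R) (x : n → R) :
    x + ν • ∑ i, P i *ᵥ (b i - A i *ᵥ x) - xstar = (1 - ν • ∑ i, P i * A i) *ᵥ (x - xstar) := by
  simp only [← hsol, ← mulVec_sub, mulVec_mulVec, ← sum_mulVec, sub_mulVec, smul_mulVec,
    one_mulVec]
  rw [← neg_sub x, mulVec_neg]
  module

theorem mul_natCast_smul_inv_natCast_smul_sum {K M : Type*} [Field K] [CharZero K]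
    [AddCommGroup M] [Module K M] (ν : K) {m : ℕ} (f : Fin m → M) :
    (ν * m) • ((m : K)⁻¹ • ∑ i, f i) = ν • ∑ i, f i := by
  rcases Nat.eq_zero_or_pos m with rfl | hm
  · simp
  · rw [smul_smul, mul_assoc, mul_inv_cancel₀ (Nat.cast_ne_zero.2 hm.ne'), mul_one]

theorem spectrum.eq_zero_of_mem_zero {𝕜 A : Type*} [Field 𝕜] [Ring A] [Algebra 𝕜 A] {μ : 𝕜}
    (h : μ ∈ spectrum 𝕜 (0 : A)) : μ = 0 := by
  cases subsingleton_or_nontrivial A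
  · simp [spectrum.of_subsingleton] at h
  · simpa [spectrum.zero_eq] using h

theorem spectrum.one_sub_smul_eq {𝕜 A : Type*} [Field 𝕜] [Ring A] [Algebra 𝕜 A] (a : A) {c : 𝕜}
    (hc : c ≠ 0) : spectrum 𝕜 (1 - c • a) = (fun μ => 1 - c * μ) '' spectrum 𝕜 a := by
  have hunit : c • a = Units.mk0 c hc • a := rfl
  rw [hunit, ← map_one (algebraMap 𝕜 A), ← spectrum.singleton_sub_eq,
    spectrum.unit_smul_eq_smul]
  ext μ
  simp [Set.mem_smul_set]

theorem ContinuousLinearMap.norm_le_of_forall_mem_spectrum_norm_le {𝕜 E : Type*} [RCLike 𝕜]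
    [NormedAddCommGroup E] [InnerProductSpace 𝕜 E] [CompleteSpace E] {T : E →L[𝕜] E}
    (hT : IsSelfAdjoint T) {ρ : ℝ} (hρ : 0 ≤ ρ) (h : ∀ μ ∈ spectrum 𝕜 T, ‖μ‖ ≤ ρ) : ‖T‖ ≤ ρ := by
  lift ρ to NNReal using hρ
  suffices ‖T‖₊ ≤ ρ from this
  rw [← ENNReal.coe_le_coe, ← T.spectralRadius_eq_nnnorm hT]
  exact iSup₂_le fun μ hμ => ENNReal.coe_le_coe.2 (h μ hμ)

theorem Matrix.IsHermitian.norm_mulVec_le_of_forall_mem_spectrum {n 𝕜 : Type*} [Fintype n]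
    [DecidableEq n] [RCLike 𝕜] {M : Matrix n n 𝕜} (hM : M.IsHermitian) {ρ : ℝ} (hρ : 0 ≤ ρ)
    (h : ∀ μ ∈ spectrum 𝕜 M, ‖μ‖ ≤ ρ) (v : n → 𝕜) :
    ‖WithLp.toLp 2 (M *ᵥ v)‖ ≤ ρ * ‖WithLp.toLp 2 v‖ := by
  rw [← toEuclideanCLM_toLp]
  refine (toEuclideanCLM (𝕜 := 𝕜) M).le_of_opNorm_le
    (ContinuousLinearMap.norm_le_of_forall_mem_spectrum_norm_le (hM.isSelfAdjoint.map _) hρ ?_) _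
  rwa [AlgEquiv.spectrum_eq]

open scoped ComplexOrder in
theorem Matrix.PosDef.pos_of_mem_spectrum {n 𝕜 : Type*} [Fintype n] [DecidableEq n] [RCLike 𝕜]
    {A : Matrix n n 𝕜} (hA : A.PosDef) {μ : ℝ} (hμ : μ ∈ spectrum ℝ A) : 0 < μ := by
  rw [hA.isHermitian.spectrum_real_eq_range_eigenvalues] at hμ
  obtain ⟨i, rfl⟩ := hμ
  exact hA.eigenvalues_pos i

theorem sqrt_dotProduct_self_eq_norm_toLp {n : Type*} [Fintype n] (v : n → ℝ) :
    √(v ⬝ᵥ v) = ‖WithLp.toLp 2 v‖ := by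
  simp [EuclideanSpace.norm_eq, dotProduct, sq]

theorem abs_one_sub_two_div_add_mul_le {a b μ : ℝ} (ha : 0 < a) (haμ : a ≤ μ) (hμb : μ ≤ b) :
    |1 - 2 / (b + a) * μ| ≤ (b - a) / (b + a) := by
  have hab : 0 < b + a := by linarith
  rw [abs_le, ← neg_div, div_mul_eq_mul_div, one_sub_div hab.ne',
    div_le_div_iff_of_pos_right hab, div_le_div_iff_of_pos_right hab]
  constructor <;> linarith

theorem block_cimmino_error_and_rate_general
    {n p m : ℕ}
    (A : Fin m → Matrix (Fin p) (Fin n) ℝ)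
    (b : Fin m → Fin p → ℝ)
    (xstar : Fin n → ℝ)
    (hsol : ∀ i, (A i).mulVec xstar = b i)
    (X : Matrix (Fin n) (Fin n) ℝ)
    (hX : X = ((m : ℝ))⁻¹ • ∑ i, (A i)ᵀ * (A i * (A i)ᵀ)⁻¹ * A i)
    (ν : ℝ)
    (xbar : ℕ → Fin n → ℝ)
    (hiter : ∀ t, xbar (t + 1) = xbar t
        + ν • ∑ i, ((A i)ᵀ * (A i * (A i)ᵀ)⁻¹).mulVec (b i - (A i).mulVec (xbar t))) :
    (∀ t, xbar (t + 1) - xstar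
        = ((1 : Matrix (Fin n) (Fin n) ℝ) - (ν * m) • X).mulVec (xbar t - xstar)) ∧
    (∀ (μmin μmax κ : ℝ), X.PosDef →
        μmin ∈ spectrum ℝ X → μmax ∈ spectrum ℝ X →
        (∀ μ ∈ spectrum ℝ X, μmin ≤ μ ∧ μ ≤ μmax) →
        κ = μmax / μmin →
        ν = 2 / (m * (μmax + μmin)) →
        ∀ t : ℕ,
          Real.sqrt ((xbar t - xstar) ⬝ᵥ (xbar t - xstar))
            ≤ ((κ - 1) / (κ + 1)) ^ t * Real.sqrt ((xbar 0 - xstar) ⬝ᵥ (xbar 0 - xstar))) := by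
  have herror : ∀ t, xbar (t + 1) - xstar = (1 - (ν * m) • X) *ᵥ (xbar t - xstar) := fun t => by
    rw [hiter, add_smul_sum_mulVec_sub_sub_eq _ _ _ hsol, hX,
      mul_natCast_smul_inv_natCast_smul_sum]
  refine ⟨herror, fun μmin μmax κ hPD hmin hmax hband hκ hν t => ?_⟩
  have hμmin : 0 < μmin := hPD.pos_of_mem_spectrum hmin
  have hle : μmin ≤ μmax := (hband μmax hmax).1
  have hsum : 0 < μmax + μmin := by linarith
  have hm : (m : ℝ) ≠ 0 := by
    rintro hm
    rw [hX, hm, _root_.inv_zero, zero_smul] at hmin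
    exact hμmin.ne' (spectrum.eq_zero_of_mem_zero hmin)
  have hc : ν * m = 2 / (μmax + μmin) := by rw [hν]; field_simp
  have hρ : (κ - 1) / (κ + 1) = (μmax - μmin) / (μmax + μmin) := by rw [hκ]; field_simp
  have hρ0 : 0 ≤ (μmax - μmin) / (μmax + μmin) := div_nonneg (sub_nonneg.2 hle) hsum.le
  simp only [sqrt_dotProduct_self_eq_norm_toLp, hρ]
  refine le_geom (u := fun k => ‖WithLp.toLp 2 (xbar k - xstar)‖) hρ0 t fun k _ => ?_
  rw [herror, hc]
  have hherm : (1 - (2 / (μmax + μmin)) • X).IsHermitian :=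
    isHermitian_one.sub (hPD.isHermitian.smul (.all _))
  refine hherm.norm_mulVec_le_of_forall_mem_spectrum hρ0 ?_ _
  rw [spectrum.one_sub_smul_eq _ (div_pos two_pos hsum).ne']
  rintro _ ⟨μ, hμ, rfl⟩
  exact abs_one_sub_two_div_add_mul_le hμmin (hband μ hμ).1 (hband μ hμ).2

/-- The block Cimmino error satisfies
`x̄(t+1) − x* = (I − ν m X)(x̄(t) − x*)`, and if `X` is positive definite with smallest and
largest eigenvalues `μ_min`, `μ_max`, `κ = μ_max/μ_min`, then for `ν = 2/(m(μ_max+μ_min))`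
the Euclidean norm of the error satisfies
`‖x̄(t) − x*‖ ≤ ((κ−1)/(κ+1))^t ‖x̄(0) − x*‖`. -/
theorem block_cimmino_error_and_rate
    {n p m : ℕ}
    (A : Fin m → Matrix (Fin p) (Fin n) ℝ)
    (b : Fin m → Fin p → ℝ)
    (hfr : ∀ i, Invertible (A i * (A i)ᵀ))
    (xstar : Fin n → ℝ)
    (hsol : ∀ i, (A i).mulVec xstar = b i)
    (huniq : ∀ y : Fin n → ℝ, (∀ i, (A i).mulVec y = b i) → y = xstar)
    (X : Matrix (Fin n) (Fin n) ℝ)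
    (hX : X = ((m : ℝ))⁻¹ • ∑ i, (A i)ᵀ * (A i * (A i)ᵀ)⁻¹ * A i)
    (ν : ℝ)
    (xbar : ℕ → Fin n → ℝ)
    (hiter : ∀ t, xbar (t + 1) = xbar t
        + ν • ∑ i, ((A i)ᵀ * (A i * (A i)ᵀ)⁻¹).mulVec (b i - (A i).mulVec (xbar t))) :
    (∀ t, xbar (t + 1) - xstar
        = ((1 : Matrix (Fin n) (Fin n) ℝ) - (ν * m) • X).mulVec (xbar t - xstar)) ∧
    (∀ (μmin μmax κ : ℝ), X.PosDef →
        μmin ∈ spectrum ℝ X → μmax ∈ spectrum ℝ X →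
        (∀ μ ∈ spectrum ℝ X, μmin ≤ μ ∧ μ ≤ μmax) →
        κ = μmax / μmin →
        ν = 2 / (m * (μmax + μmin)) →
        ∀ t : ℕ,
          Real.sqrt ((xbar t - xstar) ⬝ᵥ (xbar t - xstar))
            ≤ ((κ - 1) / (κ + 1)) ^ t * Real.sqrt ((xbar 0 - xstar) ⬝ᵥ (xbar 0 - xstar))) :=
  block_cimmino_error_and_rate_general A b xstar hsol X hX ν xbar hiter
end
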